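/- Let |s⟩ = c(|X;0⟩ + |P;a⟩) with c = √(√d/(2√d+2)) and a ∈ ℤ/dℤ such that |X;0⟩ and |P;a⟩ are not orthogonal and ⟨X;0|P;a⟩ = 1/√d. Then |s⟩ is a unit vector and for ρ = |s⟩⟨s|, G_{XP}(ρ) = ((d−1)/(d+1))(1 + 1/(1+√d)). -/

import Mathlib

open Matrix BigOperators

noncomputable def omega (d : ℕ) : ℂ := Complex.exp (2 * Real.pi * Complex.I / d)

noncomputable def wpow (d : ℕ) [NeZero d] (x : ZMod d) : ℂ := omega d ^ x.val

noncomputable def Fmat (d : ℕ) [NeZero d] : Matrix (ZMod d) (ZMod d) ℂ :=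
  Matrix.of fun r s => wpow d (r * s) / (Real.sqrt d : ℂ)

noncomputable def Zmat (d : ℕ) [NeZero d] : Matrix (ZMod d) (ZMod d) ℂ :=
  Matrix.diagonal fun m => wpow d m

noncomputable def Xmat (d : ℕ) [NeZero d] : Matrix (ZMod d) (ZMod d) ℂ :=
  Matrix.of fun m n => if m = n + 1 then 1 else 0

noncomputable def Dmat (d : ℕ) [NeZero d] (a b : ZMod d) : Matrix (ZMod d) (ZMod d) ℂ :=
  wpow d (-((2 : ZMod d)⁻¹ * a * b)) • (Zmat d ^ a.val * Xmat d ^ b.val)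

noncomputable def gini {n : Type*} [Fintype n] (p : n → ℝ) : ℝ :=
  (1 / (2 * ((Fintype.card n : ℝ) + 1))) * ∑ r, ∑ s, |p r - p s|

noncomputable def outer {n : Type*} [Fintype n] (v : n → ℂ) : Matrix n n ℂ :=
  Matrix.vecMulVec v (star v)

noncomputable def probX (d : ℕ) [NeZero d] (ρ : Matrix (ZMod d) (ZMod d) ℂ) : ZMod d → ℝ :=
  fun r => (ρ r r).re

noncomputable def probP (d : ℕ) [NeZero d] (ρ : Matrix (ZMod d) (ZMod d) ℂ) : ZMod d → ℝ :=
  fun r => (((Fmat d)ᴴ * ρ * Fmat d) r r).re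

noncomputable def giniX (d : ℕ) [NeZero d] (ρ : Matrix (ZMod d) (ZMod d) ℂ) : ℝ :=
  gini (probX d ρ)

noncomputable def giniP (d : ℕ) [NeZero d] (ρ : Matrix (ZMod d) (ZMod d) ℂ) : ℝ :=
  gini (probP d ρ)

noncomputable def giniXP (d : ℕ) [NeZero d] (ρ : Matrix (ZMod d) (ZMod d) ℂ) : ℝ :=
  giniX d ρ + giniP d ρ

variable (d : ℕ) [NeZero d]

lemma omega_prim : IsPrimitiveRoot (omega d) d := by
  simpa [omega] using Complex.isPrimitiveRoot_exp d (NeZero.ne d)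

lemma omega_ne_zero : omega d ≠ 0 := Complex.exp_ne_zero _

lemma omega_pow_d : omega d ^ d = 1 := (omega_prim d).pow_eq_one

lemma omega_zpow_mod (n : ℤ) : omega d ^ n = wpow d ((n : ZMod d)) := by
  have hz : omega d ≠ 0 := omega_ne_zero d
  have hdvd : (d:ℤ) ∣ n - (((n : ZMod d)).val : ℤ) := by
    have : ((n - (((n : ZMod d)).val : ℤ) : ℤ) : ZMod d) = 0 := by
      push_cast [ZMod.natCast_val, ZMod.cast_id]
      ring
    exact (ZMod.intCast_zmod_eq_zero_iff_dvd _ _).mp this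
  obtain ⟨k, hk⟩ := hdvd
  have hn : n = (((n : ZMod d)).val : ℤ) + d * k := by linarith
  have h1 : omega d ^ ((d:ℕ):ℤ) = 1 := by rw [zpow_natCast]; exact omega_pow_d d
  have h2 : ((((((n : ZMod d)).val : ℤ) + d * k : ℤ)) : ZMod d) = (n : ZMod d) := by
    push_cast [ZMod.natCast_val, ZMod.cast_id, ZMod.natCast_self]; ring
  rw [hn, zpow_add₀ hz, _root_.zpow_mul, h1, _root_.one_zpow, mul_one, zpow_natCast, wpow, h2]

lemma wpow_eq_zpow (x : ZMod d) : wpow d x = omega d ^ (x.val : ℤ) := by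
  rw [zpow_natCast]; rfl

lemma wpow_zero : wpow d 0 = 1 := by simp [wpow, ZMod.val_zero]

lemma conj_wpow (x : ZMod d) : (starRingEnd ℂ) (wpow d x) = wpow d (-x) := by
  have hconj : (starRingEnd ℂ) (omega d) = (omega d)⁻¹ := by
    rw [omega, ← Complex.exp_conj, ← Complex.exp_neg]
    congr 1
    simp [map_div₀, Complex.conj_I, map_ofNat]
    ring
  rw [wpow_eq_zpow, map_zpow₀, hconj, _root_.inv_zpow, ← _root_.zpow_neg, omega_zpow_mod]
  congr 1
  push_cast [ZMod.natCast_val, ZMod.cast_id]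
  ring

lemma norm_wpow (x : ZMod d) : ‖wpow d x‖ = 1 := by
  have : ‖omega d‖ = 1 := by
    have : omega d = Complex.exp ((2*Real.pi/d : ℝ) * Complex.I) := by
      rw [omega]; push_cast; ring_nf
    rw [this]; exact Complex.norm_exp_ofReal_mul_I _
  simp [wpow, map_pow, this]

lemma sum_wpow (b : ZMod d) (hb : b ≠ 0) : ∑ j : ZMod d, wpow d (j * b) = 0 := by
  have h1 : ∀ j : ZMod d, wpow d (j * b) = (omega d ^ b.val) ^ j.val := by
    intro j
    have : j * b = (((j.val * b.val : ℕ) : ℤ) : ZMod d) := by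
      push_cast [ZMod.natCast_val, ZMod.cast_id]
      ring
    rw [this, ← omega_zpow_mod, zpow_natCast, pow_mul']
  rw [Finset.sum_congr rfl fun j _ => h1 j]
  have h2 : ∑ j : ZMod d, (omega d ^ b.val) ^ j.val = ∑ i ∈ Finset.range d, (omega d ^ b.val) ^ i := by
    cases d with
    | zero => exact absurd rfl (NeZero.ne 0)
    | succ n => exact Fin.sum_univ_eq_sum_range _ _
  rw [h2, geom_sum_eq]
  · rw [← pow_mul, mul_comm, pow_mul, omega_pow_d, one_pow, sub_self, zero_div]
  · exact (omega_prim d).pow_ne_one_of_pos_of_lt (ZMod.val_pos.mpr hb).ne' (ZMod.val_lt b)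

lemma wpow_add (x y : ZMod d) : wpow d (x + y) = wpow d x * wpow d y := by
  have h : (((x.val + y.val : ℤ)) : ZMod d) = x + y := by
    push_cast [ZMod.natCast_val, ZMod.cast_id]
    ring
  rw [← h, ← omega_zpow_mod, zpow_add₀ (omega_ne_zero d), wpow_eq_zpow, wpow_eq_zpow]

lemma Fcol_inner (r b : ZMod d) :
    ∑ j : ZMod d, (starRingEnd ℂ) (Fmat d j r) * Fmat d j b =
      if r = b then 1 else 0 := by
  have hd0 : (0:ℝ) < d := Nat.cast_pos.mpr (Nat.pos_of_ne_zero (NeZero.ne d))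
  have hsd : Real.sqrt d * Real.sqrt d = d := Real.mul_self_sqrt hd0.le
  have hterm : ∀ j : ZMod d, (starRingEnd ℂ) (Fmat d j r) * Fmat d j b
      = wpow d (j * (b - r)) / (d : ℂ) := by
    intro j
    simp only [Fmat, Matrix.of_apply, map_div₀, Complex.conj_ofReal, conj_wpow]
    rw [div_mul_div_comm, ← wpow_add]
    congr 1
    · congr 1; ring
    · rw [← Complex.ofReal_mul, hsd]; norm_cast
  rw [Finset.sum_congr rfl fun j _ => hterm j]
  by_cases hrb : r = b
  · subst hrb
    simp [sub_self, wpow_zero, Finset.sum_const, ZMod.card]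
  · rw [if_neg hrb, ← Finset.sum_div, sum_wpow d (b - r) (sub_ne_zero.mpr (Ne.symm hrb)), zero_div]

lemma gini_ite (r0 : ZMod d) (A B : ℝ) :
    gini (fun r : ZMod d => if r = r0 then A else B) =
      ((d:ℝ) - 1) * |A - B| / ((d:ℝ) + 1) := by
  have hd1 : 1 ≤ d := Nat.pos_of_ne_zero (NeZero.ne d)
  have hcard : (Fintype.card (ZMod d) : ℝ) = d := by rw [ZMod.card]
  set p : ZMod d → ℝ := fun r => if r = r0 then A else B with hp
  have hrow0 : ∑ t : ZMod d, |p r0 - p t| = ((d:ℝ) - 1) * |A - B| := by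
    rw [← Finset.add_sum_erase Finset.univ _ (Finset.mem_univ r0)]
    have : ∀ t ∈ Finset.univ.erase r0, |p r0 - p t| = |A - B| := by
      intro t ht
      have := Finset.ne_of_mem_erase ht
      simp [hp, this]
    rw [Finset.sum_congr rfl this, Finset.sum_const, Finset.card_erase_of_mem (Finset.mem_univ r0),
      Finset.card_univ, ZMod.card]
    have hA : p r0 = A := if_pos rfl
    rw [hA, sub_self, abs_zero, zero_add, nsmul_eq_mul, Nat.cast_sub hd1]
    push_cast; ring
  have hrow : ∀ r : ZMod d, r ≠ r0 → ∑ t : ZMod d, |p r - p t| = |A - B| := by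
    intro r hr
    have : ∀ t : ZMod d, |p r - p t| = if t = r0 then |A - B| else 0 := by
      intro t
      by_cases ht : t = r0 <;> simp [hp, hr, ht, abs_sub_comm]
    rw [Finset.sum_congr rfl fun t _ => this t, Finset.sum_ite_eq' Finset.univ r0]
    simp
  have hdouble : ∑ r : ZMod d, ∑ t : ZMod d, |p r - p t| = 2 * ((d:ℝ) - 1) * |A - B| := by
    rw [← Finset.add_sum_erase Finset.univ _ (Finset.mem_univ r0), hrow0]
    have : ∀ r ∈ Finset.univ.erase r0, ∑ t : ZMod d, |p r - p t| = |A - B| :=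
      fun r hr => hrow r (Finset.ne_of_mem_erase hr)
    rw [Finset.sum_congr rfl this, Finset.sum_const, Finset.card_erase_of_mem (Finset.mem_univ r0),
      Finset.card_univ, ZMod.card, nsmul_eq_mul, Nat.cast_sub hd1]
    push_cast; ring
  rw [gini, hdouble, hcard]
  have : (d:ℝ) + 1 > 0 := by positivity
  field_simp

theorem special_state_giniXP (d : ℕ) [NeZero d] (hodd : Odd d) (a : ZMod d)
    (c : ℝ) (hc : c = Real.sqrt (Real.sqrt d / (2 * Real.sqrt d + 2)))
    (s : ZMod d → ℂ)
    (hs : s = fun m => (c : ℂ) *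
      ((Pi.single (0 : ZMod d) (1 : ℂ) : ZMod d → ℂ) m + (Fmat d).mulVec (Pi.single a 1) m))
    (hinner : (Fmat d).mulVec (Pi.single a 1) 0 ≠ 0)
    (hval : (Fmat d).mulVec (Pi.single a 1) 0 = ((1 / Real.sqrt d : ℝ) : ℂ)) :
    (∑ m, ‖s m‖ ^ 2 = 1) ∧
    giniXP d (outer s) =
      (((d : ℝ) - 1) / ((d : ℝ) + 1)) * (1 + 1 / (1 + Real.sqrt d)) := by

  have hd0 : (0:ℝ) < d := Nat.cast_pos.mpr (Nat.pos_of_ne_zero (NeZero.ne d))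
  set sd := Real.sqrt (d:ℝ) with hsddef
  have hsd0 : (0:ℝ) < sd := Real.sqrt_pos.mpr hd0
  have hsd2 : sd * sd = (d:ℝ) := Real.mul_self_sqrt hd0.le
  have hc2 : c ^ 2 = sd / (2 * sd + 2) := by
    rw [hc]; exact Real.sq_sqrt (by positivity)
  -- value of the Fourier column
  have hF : ∀ m : ZMod d, (Fmat d).mulVec (Pi.single a 1) m = Fmat d m a := by
    intro m
    simp [Matrix.mulVec, dotProduct, Pi.single_apply, mul_ite, Finset.sum_ite_eq']
  have hs2 : ∀ m : ZMod d, s m = (c:ℂ) * (if m = 0 then 1 else 0) + (c:ℂ) * Fmat d m a := by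
    intro m
    rw [hs]
    simp only [Pi.single_apply, hF m]
    ring
  have hF0 : ∀ r : ZMod d, Fmat d 0 r = ((1/sd : ℝ) : ℂ) := by
    intro r
    show wpow d (0 * r) / (sd : ℂ) = _
    rw [zero_mul, wpow_zero]
    push_cast
    ring
  -- norms of the state components
  have hnorm : ∀ m : ZMod d, ‖s m‖ ^ 2 =
      if m = 0 then c ^ 2 * (1 + 1/sd) ^ 2 else c ^ 2 / d := by
    intro m
    rw [hs2 m]
    by_cases hm : m = 0
    · subst hm
      rw [if_pos rfl, if_pos rfl, hF0 a]
      have : (c:ℂ) * 1 + (c:ℂ) * ((1/sd : ℝ) : ℂ) = ((c * (1 + 1/sd) : ℝ) : ℂ) := by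
        push_cast; ring
      rw [this, Complex.norm_real, Real.norm_eq_abs, sq_abs]
      ring
    · rw [if_neg hm, if_neg hm, mul_zero, zero_add]
      have : Fmat d m a = wpow d (m * a) / ((sd:ℝ) : ℂ) := rfl
      rw [this, norm_mul, norm_div, norm_wpow, Complex.norm_real, Real.norm_eq_abs,
        Complex.norm_real, Real.norm_eq_abs, abs_of_pos hsd0]
      rw [mul_pow, sq_abs, div_pow, one_pow, ← hsd2]
      ring
  -- normalization
  have hsum : ∑ m, ‖s m‖ ^ 2 = 1 := by
    rw [Finset.sum_congr rfl fun m _ => hnorm m]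
    rw [← Finset.add_sum_erase Finset.univ _ (Finset.mem_univ (0 : ZMod d)), if_pos rfl]
    have herase : ∀ m ∈ Finset.univ.erase (0 : ZMod d),
        (if m = 0 then c ^ 2 * (1 + 1/sd) ^ 2 else c ^ 2 / d) = c ^ 2 / d := by
      intro m hm
      rw [if_neg (Finset.ne_of_mem_erase hm)]
    rw [Finset.sum_congr rfl herase, Finset.sum_const,
      Finset.card_erase_of_mem (Finset.mem_univ 0), Finset.card_univ, ZMod.card,
      nsmul_eq_mul, Nat.cast_sub (Nat.pos_of_ne_zero (NeZero.ne d))]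
    rw [hc2, ← hsd2]
    push_cast
    field_simp
    ring
  refine ⟨hsum, ?_⟩
  -- position distribution
  have hprobX : probX d (outer s) = fun r : ZMod d =>
      if r = 0 then c ^ 2 * (1 + 1/sd) ^ 2 else c ^ 2 / d := by
    funext r
    show ((outer s) r r).re = _
    have h1 : (outer s) r r = s r * (starRingEnd ℂ) (s r) := by
      simp [outer, Matrix.vecMulVec_apply]
    rw [h1, Complex.mul_conj, Complex.ofReal_re, Complex.normSq_eq_norm_sq,
      hnorm r]
  -- momentum distribution
  have hT : ∀ r : ZMod d, ∑ j : ZMod d, (starRingEnd ℂ) (Fmat d j r) * s j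
      = (c:ℂ) * (((1/sd : ℝ) : ℂ) + if r = a then 1 else 0) := by
    intro r
    have hterm : ∀ j : ZMod d, (starRingEnd ℂ) (Fmat d j r) * s j
        = (if j = 0 then (c:ℂ) * (starRingEnd ℂ) (Fmat d j r) else 0)
          + (c:ℂ) * ((starRingEnd ℂ) (Fmat d j r) * Fmat d j a) := by
      intro j
      rw [hs2 j]
      by_cases hj : j = 0 <;> simp [hj] <;> ring
    rw [Finset.sum_congr rfl fun j _ => hterm j, Finset.sum_add_distrib,
      Finset.sum_ite_eq' Finset.univ (0 : ZMod d)
        (fun j => (c:ℂ) * (starRingEnd ℂ) (Fmat d j r)), ← Finset.mul_sum,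
      Fcol_inner d r a, if_pos (Finset.mem_univ 0), hF0 r, Complex.conj_ofReal]
    ring
  have hentry : ∀ r : ZMod d, ((Fmat d)ᴴ * outer s * Fmat d) r r
      = (∑ j : ZMod d, (starRingEnd ℂ) (Fmat d j r) * s j)
        * (starRingEnd ℂ) (∑ j : ZMod d, (starRingEnd ℂ) (Fmat d j r) * s j) := by
    intro r
    have h1 : ((Fmat d)ᴴ * outer s * Fmat d) r r
        = ∑ k : ZMod d, ∑ j : ZMod d,
          ((starRingEnd ℂ) (Fmat d j r) * s j) * ((starRingEnd ℂ) (s k) * Fmat d k r) := by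
      rw [Matrix.mul_apply]
      refine Finset.sum_congr rfl fun k _ => ?_
      rw [Matrix.mul_apply, Finset.sum_mul]
      refine Finset.sum_congr rfl fun j _ => ?_
      simp only [Matrix.conjTranspose_apply, outer, Matrix.vecMulVec_apply, Pi.star_apply,
        RCLike.star_def]
      ring
    rw [h1, map_sum]
    rw [Finset.sum_mul_sum]
    rw [Finset.sum_comm]
    refine Finset.sum_congr rfl fun k _ => Finset.sum_congr rfl fun j _ => ?_
    rw [_root_.map_mul, Complex.conj_conj]
    ring
  have hprobP : probP d (outer s) = fun r : ZMod d =>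
      if r = a then c ^ 2 * (1 + 1/sd) ^ 2 else c ^ 2 / d := by
    funext r
    show (((Fmat d)ᴴ * outer s * Fmat d) r r).re = _
    rw [hentry r, Complex.mul_conj, Complex.ofReal_re, Complex.normSq_eq_norm_sq,
      hT r]
    by_cases hra : r = a
    · rw [if_pos hra, if_pos hra]
      have : (c:ℂ) * (((1/sd : ℝ) : ℂ) + 1) = ((c * (1/sd + 1) : ℝ) : ℂ) := by push_cast; ring
      rw [this, Complex.norm_real, Real.norm_eq_abs, sq_abs]
      ring
    · rw [if_neg hra, if_neg hra, add_zero]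
      have : (c:ℂ) * ((1/sd : ℝ) : ℂ) = ((c * (1/sd) : ℝ) : ℂ) := by push_cast; ring
      rw [this, Complex.norm_real, Real.norm_eq_abs, sq_abs]
      rw [mul_pow, div_pow, one_pow, ← hsd2]
      ring
  -- gini computation
  have habs : |c ^ 2 * (1 + 1/sd) ^ 2 - c ^ 2 / d| = c ^ 2 * (1 + 1/sd) ^ 2 - c ^ 2 / d := by
    apply abs_of_nonneg
    have h1 : c ^ 2 / d ≤ c ^ 2 * 1 := by
      rw [mul_one]
      apply div_le_self (sq_nonneg c)
      exact_mod_cast Nat.one_le_iff_ne_zero.mpr (NeZero.ne d)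
    have h2 : c ^ 2 * 1 ≤ c ^ 2 * (1 + 1/sd) ^ 2 := by
      apply mul_le_mul_of_nonneg_left _ (sq_nonneg c)
      nlinarith [one_div_pos.mpr hsd0]
    linarith
  show gini (probX d (outer s)) + gini (probP d (outer s)) = _
  rw [hprobX, hprobP, gini_ite, gini_ite, habs, hc2, ← hsd2]
  have hne1 : sd ≠ 0 := ne_of_gt hsd0
  have hne2 : 2 * sd + 2 ≠ 0 := by positivity
  have hne3 : sd * sd + 1 ≠ 0 := by positivity
  have hne4 : 1 + sd ≠ 0 := by positivity
  field_simp
  ring
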